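/- arXiv:2504.08301 — 11 statements merged into one kernel-verified Lean document; each statement's English description precedes it below -/
import Mathlib

section
/- Let (Ω, F, P) be a probability space, Y : Ω → ℝ integrable, and c ∈ (0, 1]. Then the supremum of ∫ Y·D dP over all measurable D : Ω → ℝ satisfying 0 ≤ D ≤ 1/c P-almost everywhere and ∫ D dP = 1 equals inf over q ∈ ℝ of ( q + (1/c)·∫ max(Y − q, 0) dP ). -/
open MeasureTheory Filter Topology ProbabilityTheory Function

/-!
Weak duality is pointwise: for `0 ≤ D ≤ 1/c`, `(Y - q) D ≤ (Y - q)⁺ / c`, and integrating against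
`∫ D = 1` gives `∫ Y D ≤ q + (1/c) ∫ (Y - q)⁺`. Equality holds when `D = 1/c` on `{Y > q}` and
`D = 0` on `{Y < q}`; for `c < 1` such a feasible `D` exists when `q` is a `(1 - c)`-quantile of
`Y`, the atom `{Y = q}` carrying whatever mass is missing. For `c = 1` there need not be such a
quantile, but then `q + ∫ (Y - q)⁺ = ∫ max Y q` decreases to `∫ Y` as `q → -∞`, which is the
value of `D = 1`.
-/

theorem StieltjesFunction.exists_leftLim_le_le (F : StieltjesFunction ℝ) {p x₀ x₁ : ℝ}
    (h₀ : F x₀ < p) (h₁ : p ≤ F x₁) : ∃ q, leftLim F q ≤ p ∧ p ≤ F q := by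
  set A := {x | p ≤ F x}
  have hbdd : BddBelow A := ⟨x₀, fun x hx => (F.mono.reflect_lt (h₀.trans_le hx)).le⟩
  refine ⟨sInf A, ?_, ?_⟩
  · refine le_of_tendsto (F.mono.tendsto_leftLim _) (eventually_nhdsWithin_of_forall fun x hx => ?_)
    exact (not_le.1 (notMem_of_lt_csInf (s := A) hx hbdd)).le
  · refine ge_of_tendsto ((F.right_continuous _).mono Set.Ioi_subset_Ici_self)
      (eventually_nhdsWithin_of_forall fun x hx => ?_)
    obtain ⟨y, hyA, hyx⟩ := exists_lt_of_csInf_lt ⟨x₁, h₁⟩ hx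
    exact hyA.trans (F.mono hyx.le)

section

variable {Ω : Type*} [MeasurableSpace Ω] {P : Measure Ω} {Y D : Ω → ℝ} {c q : ℝ}

lemma exists_quantile [IsProbabilityMeasure P] (hY : Measurable Y) (hc : 0 < c) (hc1 : c < 1) :
    ∃ q, P.real {ω | q < Y ω} ≤ c ∧ c ≤ P.real {ω | q < Y ω} + P.real {ω | Y ω = q} := by
  set ν := P.map Y
  have : IsProbabilityMeasure ν := Measure.isProbabilityMeasure_map hY.aemeasurable
  obtain ⟨x₀, hx₀⟩ := ((tendsto_cdf_atBot ν).eventually (gt_mem_nhds (sub_pos.2 hc1))).exists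
  obtain ⟨x₁, hx₁⟩ := ((tendsto_cdf_atTop ν).eventually (lt_mem_nhds (sub_lt_self 1 hc))).exists
  obtain ⟨q, hleft, hright⟩ := (cdf ν).exists_leftLim_le_le hx₀ hx₁.le
  have hIoi : P.real {ω | q < Y ω} = 1 - cdf ν q := by
    rw [cdf_eq_real, ← probReal_compl_eq_one_sub measurableSet_Iic, Set.compl_Iic,
      map_measureReal_apply hY measurableSet_Ioi]
    rfl
  have hatom : P.real {ω | Y ω = q} = cdf ν q - leftLim (cdf ν) q := by
    have h := (cdf ν).measure_singleton q
    rw [measure_cdf] at h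
    rw [← ENNReal.toReal_ofReal (sub_nonneg.2 ((cdf ν).mono.leftLim_le le_rfl)), ← h,
      ← measureReal_def, map_measureReal_apply hY (measurableSet_singleton q)]
    rfl
  exact ⟨q, by linarith, by linarith⟩

lemma exists_weight_of_quantile [IsFiniteMeasure P] (hY : Measurable Y) (hc : 0 < c)
    (h₁ : P.real {ω | q < Y ω} ≤ c) (h₂ : c ≤ P.real {ω | q < Y ω} + P.real {ω | Y ω = q}) :
    ∃ D : Ω → ℝ, Measurable D ∧ (∀ ω, 0 ≤ D ω ∧ D ω ≤ 1 / c) ∧ ∫ ω, D ω ∂P = 1 ∧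
      (∀ ω, q < Y ω → D ω = 1 / c) ∧ (∀ ω, Y ω < q → D ω = 0) := by
  set a := P.real {ω | q < Y ω}
  set b := P.real {ω | Y ω = q}
  -- If `b = 0` then `a = c`, and the junk value `θ = 0` is the right one.
  set θ := (c - a) / b / c
  have hE : MeasurableSet {ω | q < Y ω} := measurableSet_lt measurable_const hY
  have hF : MeasurableSet {ω | Y ω = q} := measurableSet_eq_fun hY measurable_const
  have hθ₀ : 0 ≤ θ := div_nonneg (div_nonneg (sub_nonneg.2 h₁) measureReal_nonneg) hc.le
  have hθ₁ : θ ≤ 1 / c :=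
    div_le_div_of_nonneg_right (div_le_one_of_le₀ (by linarith) measureReal_nonneg) hc.le
  refine ⟨{ω | q < Y ω}.indicator (fun _ => 1 / c) + {ω | Y ω = q}.indicator (fun _ => θ),
    (measurable_const.indicator hE).add (measurable_const.indicator hF), fun ω => ?_, ?_,
    fun ω h => by simp [h, h.ne'], fun ω h => by simp [h.ne, h.not_gt]⟩
  · rcases lt_trichotomy (Y ω) q with h | rfl | h
    · simp [h.ne, h.not_gt, hc.le]
    · simpa [hθ₀] using hθ₁
    · simp [h, h.ne', hc.le]
  · rw [Pi.add_def, integral_add ((integrable_const _).indicator hE)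
      ((integrable_const _).indicator hF), integral_indicator_const _ hE,
      integral_indicator_const _ hF, smul_eq_mul, smul_eq_mul]
    change a * (1 / c) + b * θ = 1
    rcases eq_or_ne b 0 with hb | hb
    · rw [hb, show a = c by linarith, zero_mul, add_zero, mul_one_div_cancel hc.ne']
    · simp only [θ]
      field_simp
      ring

lemma integral_mul_eq_add_integral_sub_mul [IsFiniteMeasure P] {C : ℝ} (hY : Integrable Y P)
    (hD : AEStronglyMeasurable D P) (hDC : ∀ᵐ ω ∂P, ‖D ω‖ ≤ C) (hD1 : ∫ ω, D ω ∂P = 1)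
    (q : ℝ) : ∫ ω, Y ω * D ω ∂P = q + ∫ ω, (Y ω - q) * D ω ∂P := by
  simp_rw [sub_mul]
  rw [integral_sub (hY.mul_bdd hD hDC) ((Integrable.of_bound hD C hDC).const_mul q),
    integral_const_mul, hD1]
  ring

lemma integral_mul_le [IsFiniteMeasure P] (hY : Integrable Y P)
    (hD : AEStronglyMeasurable D P) (hDb : ∀ᵐ ω ∂P, 0 ≤ D ω ∧ D ω ≤ 1 / c)
    (hD1 : ∫ ω, D ω ∂P = 1) (q : ℝ) :
    ∫ ω, Y ω * D ω ∂P ≤ q + 1 / c * ∫ ω, max (Y ω - q) 0 ∂P := by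
  have hDn : ∀ᵐ ω ∂P, ‖D ω‖ ≤ 1 / c :=
    hDb.mono fun ω h => (Real.norm_of_nonneg h.1).trans_le h.2
  have hYq : Integrable (fun ω => Y ω - q) P := hY.sub (integrable_const q)
  rw [integral_mul_eq_add_integral_sub_mul hY hD hDn hD1 q, ← integral_const_mul]
  refine (add_le_add_iff_left q).2 <|
    integral_mono_ae (hYq.mul_bdd hD hDn) (hYq.pos_part.const_mul _) ?_
  filter_upwards [hDb] with ω ⟨h₀, h₁⟩
  calc (Y ω - q) * D ω ≤ max (Y ω - q) 0 * D ω := by gcongr; exact le_max_left _ _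
    _ ≤ max (Y ω - q) 0 * (1 / c) := by gcongr
    _ = 1 / c * max (Y ω - q) 0 := mul_comm _ _

lemma integral_mul_eq_of_slackness [IsFiniteMeasure P] (hY : Integrable Y P)
    (hD : AEStronglyMeasurable D P) (hDb : ∀ᵐ ω ∂P, 0 ≤ D ω ∧ D ω ≤ 1 / c)
    (hD1 : ∫ ω, D ω ∂P = 1) (hup : ∀ᵐ ω ∂P, q < Y ω → D ω = 1 / c)
    (hdown : ∀ᵐ ω ∂P, Y ω < q → D ω = 0) :
    ∫ ω, Y ω * D ω ∂P = q + 1 / c * ∫ ω, max (Y ω - q) 0 ∂P := by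
  have hDn : ∀ᵐ ω ∂P, ‖D ω‖ ≤ 1 / c :=
    hDb.mono fun ω h => (Real.norm_of_nonneg h.1).trans_le h.2
  rw [integral_mul_eq_add_integral_sub_mul hY hD hDn hD1 q, ← integral_const_mul]
  congr 1
  refine integral_congr_ae ?_
  filter_upwards [hup, hdown] with ω hu hd
  rcases lt_trichotomy (Y ω) q with h | h | h
  · simp [hd h, (sub_neg.2 h).le]
  · simp [h]
  · simp [hu h, (sub_pos.2 h).le, mul_comm]

lemma exists_weight_integral_mul_eq [IsProbabilityMeasure P] (hY : Integrable Y P) (hc : 0 < c)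
    (hc1 : c < 1) :
    ∃ q, ∃ D : Ω → ℝ, Measurable D ∧ (∀ᵐ ω ∂P, 0 ≤ D ω ∧ D ω ≤ 1 / c) ∧ ∫ ω, D ω ∂P = 1 ∧
      ∫ ω, Y ω * D ω ∂P = q + 1 / c * ∫ ω, max (Y ω - q) 0 ∂P := by
  obtain ⟨Y', hY'm, hYY'⟩ := hY.aemeasurable
  obtain ⟨q, h₁, h₂⟩ := exists_quantile (P := P) hY'm hc hc1
  obtain ⟨D, hDm, hDb, hD1, hup, hdown⟩ := exists_weight_of_quantile hY'm hc h₁ h₂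
  refine ⟨q, D, hDm, ae_of_all _ hDb, hD1,
    integral_mul_eq_of_slackness hY hDm.aestronglyMeasurable (ae_of_all _ hDb) hD1 ?_ ?_⟩
  · filter_upwards [hYY'] with ω h using h ▸ hup ω
  · filter_upwards [hYY'] with ω h using h ▸ hdown ω

lemma tendsto_integral_max_atBot (hY : Integrable Y P) :
    Tendsto (fun q => ∫ ω, max (Y ω) q ∂P) atBot (𝓝 (∫ ω, Y ω ∂P)) := by
  refine tendsto_integral_filter_of_dominated_convergence (fun ω => |Y ω|)
    (.of_forall fun q => hY.aestronglyMeasurable.sup aestronglyMeasurable_const)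
    ?_ hY.abs (.of_forall fun ω => ?_)
  · filter_upwards [eventually_le_atBot 0] with q hq
    refine .of_forall fun ω => abs_le.2 ⟨?_, ?_⟩
    · exact (neg_abs_le _).trans (le_max_left _ _)
    · exact max_le (le_abs_self _) (hq.trans (abs_nonneg _))
  · refine tendsto_const_nhds.congr' ?_
    filter_upwards [eventually_le_atBot (Y ω)] with q hq using (max_eq_left hq).symm

lemma add_integral_max_sub_eq [IsProbabilityMeasure P] (hY : Integrable Y P) (q : ℝ) :
    q + ∫ ω, max (Y ω - q) 0 ∂P = ∫ ω, max (Y ω) q ∂P := by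
  simp_rw [← sub_self q, max_sub_sub_right]
  rw [integral_sub (f := fun ω => max (Y ω) q) (hY.sup (integrable_const q)) (integrable_const q)]
  simp

end

theorem generalized_neyman_pearson
    {Ω : Type*} [MeasurableSpace Ω] (P : Measure Ω) [IsProbabilityMeasure P]
    (Y : Ω → ℝ) (hY : Integrable Y P) (c : ℝ) (hc : 0 < c) (hc1 : c ≤ 1) :
    sSup {x : ℝ | ∃ D : Ω → ℝ, Measurable D ∧
        (∀ᵐ ω ∂P, 0 ≤ D ω ∧ D ω ≤ 1 / c) ∧
        (∫ ω, D ω ∂P) = 1 ∧ x = ∫ ω, Y ω * D ω ∂P} =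
      ⨅ q : ℝ, (q + (1 / c) * ∫ ω, max (Y ω - q) 0 ∂P) := by
  set S := {x : ℝ | ∃ D : Ω → ℝ, Measurable D ∧ (∀ᵐ ω ∂P, 0 ≤ D ω ∧ D ω ≤ 1 / c) ∧
    (∫ ω, D ω ∂P) = 1 ∧ x = ∫ ω, Y ω * D ω ∂P}
  set g := fun q : ℝ => q + (1 / c) * ∫ ω, max (Y ω - q) 0 ∂P
  have hweak : ∀ x ∈ S, ∀ q, x ≤ g q := by
    rintro x ⟨D, hDm, hDb, hD1, rfl⟩ q
    exact integral_mul_le hY hDm.aestronglyMeasurable hDb hD1 q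
  have hmean : ∫ ω, Y ω ∂P ∈ S :=
    ⟨1, measurable_const, .of_forall fun _ => ⟨zero_le_one, one_le_one_div hc hc1⟩, by simp,
      by simp⟩
  have hS : BddAbove S := ⟨g 0, fun x hx => hweak x hx 0⟩
  have hg : BddBelow (Set.range g) := ⟨_, Set.forall_mem_range.2 (hweak _ hmean)⟩
  refine le_antisymm (csSup_le ⟨_, hmean⟩ fun x hx => le_ciInf (hweak x hx)) ?_
  rcases hc1.lt_or_eq with hc1 | rfl
  · obtain ⟨q, D, hDm, hDb, hD1, hq⟩ := exists_weight_integral_mul_eq hY hc hc1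
    exact (ciInf_le hg q).trans (le_csSup hS ⟨D, hDm, hDb, hD1, hq.symm⟩)
  · have hlim : Tendsto g atBot (𝓝 (∫ ω, Y ω ∂P)) := by
      simpa [g, add_integral_max_sub_eq hY] using tendsto_integral_max_atBot hY
    exact (ge_of_tendsto hlim (.of_forall (ciInf_le hg))).trans (le_csSup hS hmean)
end

section
/- Let (Ω, F, P) be a probability space, Y : Ω → ℝ integrable, and A ∈ F an event with P(A) = c > 0. Then for every q ∈ ℝ and q′ ∈ ℝ: (1/c)·∫_A Y dP ≤ ∫ Y dP + (1/c)·∫ ρ_{1−c}(Y, q) dP, and (1/c)·∫_A Y dP ≥ ∫ Y dP − (1/c)·∫ ρ_c(Y, q′) dP. -/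
/-!
Put `c = P(A)`. For every level `q`, `∫_A Y = c q + ∫_A (Y - q) ≤ c q + E (Y - q)⁺`, and since
`ρ_{1-c}(y, q) = (y - q)⁺ - c (y - q)` the right-hand side is exactly `c E Y + E ρ_{1-c}(Y, q)`.
The lower bound is the upper bound for `-Y` at level `-q'`, because `ρ_t(-y, -q) = ρ_{1-t}(y, q)`.
-/

open MeasureTheory

/-- The check function ρ_t(y, q) = t·max(y − q, 0) + (1 − t)·max(q − y, 0). -/
noncomputable def check (t y q : ℝ) : ℝ := t * max (y - q) 0 + (1 - t) * max (q - y) 0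

lemma check_eq_max_sub (t y q : ℝ) : check t y q = max (y - q) 0 - (1 - t) * (y - q) := by
  have h := max_zero_sub_max_neg_zero_eq_self (y - q)
  rw [neg_sub] at h
  unfold check
  linear_combination (t - 1) * h

lemma check_neg_neg (t y q : ℝ) : check t (-y) (-q) = check (1 - t) y q := by
  unfold check
  rw [neg_sub_neg, neg_sub_neg, sub_sub_cancel]
  ring

section

variable {Ω : Type*} [MeasurableSpace Ω] {P : Measure Ω} {Y : Ω → ℝ}

lemma setIntegral_le_measureReal_mul_add_integral_max [IsFiniteMeasure P] (hY : Integrable Y P)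
    (A : Set Ω) (q : ℝ) :
    ∫ ω in A, Y ω ∂P ≤ P.real A * q + ∫ ω, max (Y ω - q) 0 ∂P := by
  have hYq : Integrable (fun ω => Y ω - q) P := hY.sub (integrable_const q)
  calc ∫ ω in A, Y ω ∂P = P.real A * q + ∫ ω in A, (Y ω - q) ∂P := by
        rw [integral_sub hY.integrableOn (integrable_const q).integrableOn, setIntegral_const,
          smul_eq_mul]
        ring
    _ ≤ P.real A * q + ∫ ω in A, max (Y ω - q) 0 ∂P := by
        grw [setIntegral_mono hYq.integrableOn hYq.pos_part.integrableOn
          fun ω => le_max_left (Y ω - q) 0]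
    _ ≤ P.real A * q + ∫ ω, max (Y ω - q) 0 ∂P := by
        grw [setIntegral_le_integral hYq.pos_part (ae_of_all _ fun ω => le_max_right (Y ω - q) 0)]

lemma integral_check [IsProbabilityMeasure P] (hY : Integrable Y P) (t q : ℝ) :
    ∫ ω, check t (Y ω) q ∂P = ∫ ω, max (Y ω - q) 0 ∂P - (1 - t) * (∫ ω, Y ω ∂P - q) := by
  have hYq : Integrable (fun ω => Y ω - q) P := hY.sub (integrable_const q)
  simp_rw [check_eq_max_sub]
  rw [integral_sub hYq.pos_part (hYq.const_mul _), integral_const_mul,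
    integral_sub hY (integrable_const q), integral_const, probReal_univ, one_smul]

lemma setIntegral_le_measureReal_mul_integral_add_integral_check [IsProbabilityMeasure P]
    (hY : Integrable Y P) (A : Set Ω) (q : ℝ) :
    ∫ ω in A, Y ω ∂P ≤ P.real A * ∫ ω, Y ω ∂P + ∫ ω, check (1 - P.real A) (Y ω) q ∂P := by
  rw [integral_check hY, sub_sub_cancel]
  linarith [setIntegral_le_measureReal_mul_add_integral_max hY A q]

end

theorem conditional_mean_bounds_general
    {Ω : Type*} [MeasurableSpace Ω] (P : Measure Ω) [IsProbabilityMeasure P]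
    (Y : Ω → ℝ) (hY : Integrable Y P)
    (A : Set Ω) (c : ℝ) (hc : 0 < c) (hPA : (P A).toReal = c)
    (q q' : ℝ) :
    (1 / c) * ∫ ω in A, Y ω ∂P ≤ (∫ ω, Y ω ∂P) + (1 / c) * ∫ ω, check (1 - c) (Y ω) q ∂P ∧
      (∫ ω, Y ω ∂P) - (1 / c) * ∫ ω, check c (Y ω) q' ∂P ≤ (1 / c) * ∫ ω in A, Y ω ∂P := by
  rw [← measureReal_def] at hPA
  have upper := setIntegral_le_measureReal_mul_integral_add_integral_check hY A q
  have lower := setIntegral_le_measureReal_mul_integral_add_integral_check hY.neg A (-q')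
  simp only [hPA, Pi.neg_apply, check_neg_neg, sub_sub_cancel, integral_neg] at upper lower
  constructor <;> field_simp <;> linarith

theorem conditional_mean_bounds
    {Ω : Type*} [MeasurableSpace Ω] (P : Measure Ω) [IsProbabilityMeasure P]
    (Y : Ω → ℝ) (hY : Integrable Y P)
    (A : Set Ω) (hA : MeasurableSet A) (c : ℝ) (hc : 0 < c) (hPA : (P A).toReal = c)
    (q q' : ℝ) :
    (1 / c) * ∫ ω in A, Y ω ∂P ≤ (∫ ω, Y ω ∂P) + (1 / c) * ∫ ω, check (1 - c) (Y ω) q ∂P ∧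
      (∫ ω, Y ω ∂P) - (1 / c) * ∫ ω, check c (Y ω) q' ∂P ≤ (1 / c) * ∫ ω in A, Y ω ∂P :=
  conditional_mean_bounds_general P Y hY A c hc hPA q q'
end

section
/- Let p ∈ [0, 1] and τ ∈ (0, 1), and let μ be the Bernoulli probability measure on ℝ given by μ = p·δ_1 + (1 − p)·δ_0 (point masses at 1 and 0). Then inf over q ∈ ℝ of ∫ ρ_τ(y, q) dμ(y) = min( (1 − τ)·(1 − p), τ·p ). -/
open MeasureTheory

lemma check_meas (t q : ℝ) : StronglyMeasurable (fun y => check t y q) := by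
  apply Continuous.stronglyMeasurable
  unfold check
  continuity

lemma integrable_smul_dirac (f : ℝ → ℝ) (hf : StronglyMeasurable f) (c : ENNReal)
    (hc : c ≠ ⊤) (a : ℝ) : Integrable f (c • Measure.dirac a) := by
  refine ⟨hf.aestronglyMeasurable, ?_⟩
  rw [HasFiniteIntegral, lintegral_smul_measure, lintegral_dirac]
  exact ENNReal.mul_lt_top hc.lt_top (by simp)

lemma integral_bernoulli_check (p τ : ℝ) (hp : p ∈ Set.Icc (0 : ℝ) 1) (q : ℝ) :
    (∫ y, check τ y q
        ∂(ENNReal.ofReal p • Measure.dirac (1 : ℝ) +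
          ENNReal.ofReal (1 - p) • Measure.dirac (0 : ℝ))) =
      p * check τ 1 q + (1 - p) * check τ 0 q := by
  rw [integral_add_measure, integral_smul_measure, integral_smul_measure,
    integral_dirac' _ _ (check_meas τ q), integral_dirac' _ _ (check_meas τ q)]
  · simp [ENNReal.toReal_ofReal hp.1, ENNReal.toReal_ofReal (by linarith [hp.2] : (0:ℝ) ≤ 1 - p)]
  · exact integrable_smul_dirac _ (check_meas τ q) _ ENNReal.ofReal_ne_top _
  · exact integrable_smul_dirac _ (check_meas τ q) _ ENNReal.ofReal_ne_top _

theorem bernoulli_optimized_quantile_loss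
    (p τ : ℝ) (hp : p ∈ Set.Icc (0 : ℝ) 1) (hτ : τ ∈ Set.Ioo (0 : ℝ) 1) :
    (⨅ q : ℝ, ∫ y, check τ y q
        ∂(ENNReal.ofReal p • Measure.dirac (1 : ℝ) +
          ENNReal.ofReal (1 - p) • Measure.dirac (0 : ℝ))) =
      min ((1 - τ) * (1 - p)) (τ * p) := by
  obtain ⟨hp0, hp1⟩ := hp
  obtain ⟨hτ0, hτ1⟩ := hτ
  have hg : ∀ q : ℝ, (∫ y, check τ y q
        ∂(ENNReal.ofReal p • Measure.dirac (1 : ℝ) +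
          ENNReal.ofReal (1 - p) • Measure.dirac (0 : ℝ))) =
      p * check τ 1 q + (1 - p) * check τ 0 q :=
    integral_bernoulli_check p τ ⟨hp0, hp1⟩
  have hlow : ∀ q : ℝ, min ((1 - τ) * (1 - p)) (τ * p) ≤
      p * check τ 1 q + (1 - p) * check τ 0 q := by
    intro q
    unfold check
    rcases le_total q 0 with h0 | h0
    · rw [max_eq_right (by linarith : q - 1 ≤ 0), max_eq_left (by linarith : (0:ℝ) ≤ 1 - q),
        max_eq_right (by linarith : q - 0 ≤ 0), max_eq_left (by linarith : (0:ℝ) ≤ 0 - q)]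
      have : min ((1 - τ) * (1 - p)) (τ * p) ≤ τ * p := min_le_right _ _
      nlinarith
    rcases le_total q 1 with h1 | h1
    · rw [max_eq_right (by linarith : q - 1 ≤ 0), max_eq_left (by linarith : (0:ℝ) ≤ 1 - q),
        max_eq_left (by linarith : (0:ℝ) ≤ q - 0), max_eq_right (by linarith : 0 - q ≤ 0)]
      have ha : min ((1 - τ) * (1 - p)) (τ * p) ≤ τ * p := min_le_right _ _
      have hb : min ((1 - τ) * (1 - p)) (τ * p) ≤ (1 - τ) * (1 - p) := min_le_left _ _
      nlinarith
    · rw [max_eq_left (by linarith : (0:ℝ) ≤ q - 1), max_eq_right (by linarith : 1 - q ≤ 0),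
        max_eq_left (by linarith : (0:ℝ) ≤ q - 0), max_eq_right (by linarith : 0 - q ≤ 0)]
      have : min ((1 - τ) * (1 - p)) (τ * p) ≤ (1 - τ) * (1 - p) := min_le_left _ _
      nlinarith
  have hbdd : BddBelow (Set.range fun q : ℝ => ∫ y, check τ y q
        ∂(ENNReal.ofReal p • Measure.dirac (1 : ℝ) +
          ENNReal.ofReal (1 - p) • Measure.dirac (0 : ℝ))) := by
    refine ⟨min ((1 - τ) * (1 - p)) (τ * p), ?_⟩
    rintro x ⟨q, rfl⟩
    dsimp only
    rw [hg q]; exact hlow q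
  apply le_antisymm
  · apply le_min
    · calc (⨅ q : ℝ, ∫ y, check τ y q
          ∂(ENNReal.ofReal p • Measure.dirac (1 : ℝ) +
            ENNReal.ofReal (1 - p) • Measure.dirac (0 : ℝ))) ≤ _ := ciInf_le hbdd (1 : ℝ)
      _ = (1 - τ) * (1 - p) := by rw [hg]; unfold check; norm_num; ring
    · calc (⨅ q : ℝ, ∫ y, check τ y q
          ∂(ENNReal.ofReal p • Measure.dirac (1 : ℝ) +
            ENNReal.ofReal (1 - p) • Measure.dirac (0 : ℝ))) ≤ _ := ciInf_le hbdd (0 : ℝ)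
      _ = τ * p := by rw [hg]; unfold check; norm_num; ring
  · exact le_ciInf fun q => by rw [hg q]; exact hlow q
end

section
/- Let μ be a probability measure on a measurable space α, and let λ, η : α → ℝ be measurable. Let 0 ≤ Λ₁ ≤ 1 ≤ Λ₂ with Λ₁ < Λ₂, let Δ₁, Δ₂ ≥ 0 and m ∈ ℝ, and set τ := (Λ₂ − 1)/(Λ₂ − Λ₁). Assume Λ₁ ≤ λ(u) ≤ Λ₂ for μ-almost every u, ∫ λ dμ = 1, m − Δ₁ ≤ η(u) ≤ m + Δ₂ for μ-almost every u, and ∫ η dμ = m. Then ∫ η·λ dμ ≤ m + (Λ₂ − Λ₁)·min( τ·Δ₁, (1 − τ)·Δ₂ ). -/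
/-!
`∫ η λ dμ - m` is the covariance of `η` and `λ`. Integrating `(η - (m + Δ₂)) (λ - Λ₁) ≤ 0` bounds it
by `(1 - Λ₁) Δ₂`, and integrating `(η - (m - Δ₁)) (λ - Λ₂) ≤ 0` bounds it by `(Λ₂ - 1) Δ₁`. Since
`τ (Λ₂ - Λ₁) = Λ₂ - 1` and `(1 - τ) (Λ₂ - Λ₁) = 1 - Λ₁`, the claimed bound is the smaller of the two.
-/

open MeasureTheory

namespace MeasureTheory

variable {α : Type*} [MeasurableSpace α] {μ : Measure α} [IsProbabilityMeasure μ]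
  {f g : α → ℝ}

theorem integral_sub_const_mul_sub_const (hf : Integrable f μ) (hg : Integrable g μ)
    (hfg : Integrable (fun u => f u * g u) μ) (a b : ℝ) :
    ∫ u, (f u - a) * (g u - b) ∂μ =
      ∫ u, f u * g u ∂μ - b * ∫ u, f u ∂μ - a * ∫ u, g u ∂μ + a * b := by
  calc ∫ u, (f u - a) * (g u - b) ∂μ
      = ∫ u, (f u * g u - b * f u) - (a * g u - a * b) ∂μ := by
        congr 1; ext u; ring
    _ = _ := by
        have hfg_sub : Integrable (fun u => f u * g u - b * f u) μ := hfg.sub (hf.const_mul b)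
        have hg_sub : Integrable (fun u => a * g u - a * b) μ :=
          (hg.const_mul a).sub (integrable_const _)
        rw [integral_sub hfg_sub hg_sub,
          integral_sub hfg (hf.const_mul b), integral_sub (hg.const_mul a) (integrable_const _),
          integral_const_mul, integral_const_mul, integral_const]
        simp only [probReal_univ, one_smul]
        ring

theorem integral_mul_sub_integral_mul_integral_le_of_ae_le_of_ae_ge {M b : ℝ}
    (hf : Integrable f μ) (hg : Integrable g μ) (hfg : Integrable (fun u => f u * g u) μ)
    (hfM : ∀ᵐ u ∂μ, f u ≤ M) (hgb : ∀ᵐ u ∂μ, b ≤ g u) :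
    ∫ u, f u * g u ∂μ - (∫ u, f u ∂μ) * ∫ u, g u ∂μ ≤
      (M - ∫ u, f u ∂μ) * (∫ u, g u ∂μ - b) := by
  have hnonpos : ∫ u, (f u - M) * (g u - b) ∂μ ≤ 0 := by
    refine integral_nonpos_of_ae ?_
    filter_upwards [hfM, hgb] with u hu hu'
    exact mul_nonpos_of_nonpos_of_nonneg (sub_nonpos.2 hu) (sub_nonneg.2 hu')
  rw [integral_sub_const_mul_sub_const hf hg hfg] at hnonpos
  linarith

theorem integral_mul_sub_integral_mul_integral_le_of_ae_ge_of_ae_le {L B : ℝ}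
    (hf : Integrable f μ) (hg : Integrable g μ) (hfg : Integrable (fun u => f u * g u) μ)
    (hfL : ∀ᵐ u ∂μ, L ≤ f u) (hgB : ∀ᵐ u ∂μ, g u ≤ B) :
    ∫ u, f u * g u ∂μ - (∫ u, f u ∂μ) * ∫ u, g u ∂μ ≤
      (∫ u, f u ∂μ - L) * (B - ∫ u, g u ∂μ) := by
  have h := integral_mul_sub_integral_mul_integral_le_of_ae_le_of_ae_ge (f := fun u => -f u)
    (g := fun u => -g u) (M := -L) (b := -B) hf.neg hg.neg (by simpa only [neg_mul_neg] using hfg)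
    (hfL.mono fun u hu => neg_le_neg hu) (hgB.mono fun u hu => neg_le_neg hu)
  simp only [neg_mul_neg, integral_neg] at h
  linarith

end MeasureTheory

theorem eMSM_relaxed_upper_bound_general
    {α : Type*} [MeasurableSpace α] (μ : Measure α) [IsProbabilityMeasure μ]
    (lam η : α → ℝ) (hlam : Measurable lam) (hη : Measurable η)
    (Λ₁ Λ₂ Δ₁ Δ₂ m : ℝ)
    (hΛlt : Λ₁ < Λ₂)
    (hlam_bd : ∀ᵐ u ∂μ, Λ₁ ≤ lam u ∧ lam u ≤ Λ₂)
    (hlam_int : (∫ u, lam u ∂μ) = 1)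
    (hη_bd : ∀ᵐ u ∂μ, m - Δ₁ ≤ η u ∧ η u ≤ m + Δ₂)
    (hη_int : (∫ u, η u ∂μ) = m) :
    (∫ u, η u * lam u ∂μ) ≤
      m + (Λ₂ - Λ₁) *
        min (((Λ₂ - 1) / (Λ₂ - Λ₁)) * Δ₁) ((1 - (Λ₂ - 1) / (Λ₂ - Λ₁)) * Δ₂) := by
  have hlamI : Integrable lam μ := .of_mem_Icc Λ₁ Λ₂ hlam.aemeasurable hlam_bd
  have hηI : Integrable η μ := .of_mem_Icc (m - Δ₁) (m + Δ₂) hη.aemeasurable hη_bd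
  have hprodI : Integrable (fun u => η u * lam u) μ :=
    hηI.mul_bdd hlam.aestronglyMeasurable
      (hlam_bd.mono fun u hu => abs_le_max_abs_abs hu.1 hu.2)
  have hcov_le_Δ₂ := integral_mul_sub_integral_mul_integral_le_of_ae_le_of_ae_ge hηI hlamI hprodI
    (hη_bd.mono fun _ hu => hu.2) (hlam_bd.mono fun _ hu => hu.1)
  have hcov_le_Δ₁ := integral_mul_sub_integral_mul_integral_le_of_ae_ge_of_ae_le hηI hlamI hprodI
    (hη_bd.mono fun _ hu => hu.1) (hlam_bd.mono fun _ hu => hu.2)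
  rw [hη_int, hlam_int] at hcov_le_Δ₂ hcov_le_Δ₁
  have hΛ : Λ₂ - Λ₁ ≠ 0 := sub_ne_zero.2 hΛlt.ne'
  have hmin : (Λ₂ - Λ₁) * min (((Λ₂ - 1) / (Λ₂ - Λ₁)) * Δ₁) ((1 - (Λ₂ - 1) / (Λ₂ - Λ₁)) * Δ₂)
      = min ((Λ₂ - 1) * Δ₁) ((1 - Λ₁) * Δ₂) := by
    rw [mul_min_of_nonneg _ _ (sub_nonneg.2 hΛlt.le)]
    congr 1
    · field_simp
    · field_simp
      ring
  rw [hmin]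
  have hΔ₁_bound : ∫ u, η u * lam u ∂μ - m ≤ (Λ₂ - 1) * Δ₁ := by linarith
  have hΔ₂_bound : ∫ u, η u * lam u ∂μ - m ≤ (1 - Λ₁) * Δ₂ := by linarith
  linarith [le_min hΔ₁_bound hΔ₂_bound]

theorem eMSM_relaxed_upper_bound
    {α : Type*} [MeasurableSpace α] (μ : Measure α) [IsProbabilityMeasure μ]
    (lam η : α → ℝ) (hlam : Measurable lam) (hη : Measurable η)
    (Λ₁ Λ₂ Δ₁ Δ₂ m : ℝ)
    (hΛ₁0 : 0 ≤ Λ₁) (hΛ₁1 : Λ₁ ≤ 1) (hΛ₂1 : 1 ≤ Λ₂) (hΛlt : Λ₁ < Λ₂)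
    (hΔ₁ : 0 ≤ Δ₁) (hΔ₂ : 0 ≤ Δ₂)
    (hlam_bd : ∀ᵐ u ∂μ, Λ₁ ≤ lam u ∧ lam u ≤ Λ₂)
    (hlam_int : (∫ u, lam u ∂μ) = 1)
    (hη_bd : ∀ᵐ u ∂μ, m - Δ₁ ≤ η u ∧ η u ≤ m + Δ₂)
    (hη_int : (∫ u, η u ∂μ) = m) :
    (∫ u, η u * lam u ∂μ) ≤
      m + (Λ₂ - Λ₁) *
        min (((Λ₂ - 1) / (Λ₂ - Λ₁)) * Δ₁) ((1 - (Λ₂ - 1) / (Λ₂ - Λ₁)) * Δ₂) :=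
  eMSM_relaxed_upper_bound_general μ lam η hlam hη Λ₁ Λ₂ Δ₁ Δ₂ m hΛlt hlam_bd hlam_int hη_bd hη_int
end

section
/- Let μ be a probability measure on a measurable space α, and let λ, η : α → ℝ be measurable. Let 0 ≤ Λ₁ ≤ 1 ≤ Λ₂ with Λ₁ < Λ₂, let Δ₁, Δ₂ ≥ 0 and m ∈ ℝ, and set τ := (Λ₂ − 1)/(Λ₂ − Λ₁). Assume Λ₁ ≤ λ(u) ≤ Λ₂ for μ-almost every u, ∫ λ dμ = 1, m − Δ₁ ≤ η(u) ≤ m + Δ₂ for μ-almost every u, and ∫ η dμ = m. Then ∫ η·λ dμ ≥ m − (Λ₂ − Λ₁)·min( (1 − τ)·Δ₁, τ·Δ₂ ). -/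
/-!
For a.e. bounds `a ≤ f` and `c ≤ g`, integrating `(f - a) (g - c) ≥ 0` against a probability
measure gives `∫ f g ≥ c ∫ f + a ∫ g - a c`, and the same with both bounds reversed.
With `∫ λ = 1` and `∫ η = m`, the lower bounds `m - Δ₁ ≤ η`, `Λ₁ ≤ λ` give
`∫ η λ ≥ m - (1 - Λ₁) Δ₁`, and the upper bounds `η ≤ m + Δ₂`, `λ ≤ Λ₂` give
`∫ η λ ≥ m - (Λ₂ - 1) Δ₂`. The claimed bound is the larger of the two, because
`(Λ₂ - Λ₁)(1 - τ) = 1 - Λ₁` and `(Λ₂ - Λ₁) τ = Λ₂ - 1`.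
-/

open MeasureTheory

section

variable {α : Type*} [MeasurableSpace α] {μ : Measure α} [IsProbabilityMeasure μ]
  {f g : α → ℝ} {a c : ℝ}

theorem integral_mul_ge_of_ae_ge (hf : Integrable f μ) (hg : Integrable g μ)
    (hfg : Integrable (fun u => f u * g u) μ) (ha : ∀ᵐ u ∂μ, a ≤ f u) (hc : ∀ᵐ u ∂μ, c ≤ g u) :
    c * ∫ u, f u ∂μ + a * ∫ u, g u ∂μ - a * c ≤ ∫ u, f u * g u ∂μ := by
  have hexpand : (fun u => (f u - a) * (g u - c)) =
      fun u => (f u * g u - c * f u) - (a * g u - a * c) := by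
    funext u; ring
  have hnonneg : 0 ≤ ∫ u, (f u - a) * (g u - c) ∂μ := by
    refine integral_nonneg_of_ae ?_
    filter_upwards [ha, hc] with u hau hcu
    exact mul_nonneg (sub_nonneg.mpr hau) (sub_nonneg.mpr hcu)
  rw [hexpand, integral_sub (f := fun u => f u * g u - c * f u) (g := fun u => a * g u - a * c)
      (hfg.sub (hf.const_mul c)) ((hg.const_mul a).sub (integrable_const _)),
    integral_sub hfg (hf.const_mul c), integral_sub (hg.const_mul a) (integrable_const _),
    integral_const_mul, integral_const_mul] at hnonneg
  simp only [integral_const, probReal_univ, smul_eq_mul, one_mul] at hnonneg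
  linarith

theorem integral_mul_ge_of_ae_le (hf : Integrable f μ) (hg : Integrable g μ)
    (hfg : Integrable (fun u => f u * g u) μ) (ha : ∀ᵐ u ∂μ, f u ≤ a) (hc : ∀ᵐ u ∂μ, g u ≤ c) :
    c * ∫ u, f u ∂μ + a * ∫ u, g u ∂μ - a * c ≤ ∫ u, f u * g u ∂μ := by
  have h := integral_mul_ge_of_ae_ge (f := fun u => -f u) (g := fun u => -g u) (a := -a) (c := -c) hf.neg hg.neg
    (by simpa only [neg_mul_neg] using hfg)
    (by filter_upwards [ha] with u hu; exact neg_le_neg hu)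
    (by filter_upwards [hc] with u hu; exact neg_le_neg hu)
  simp only [neg_mul_neg, integral_neg] at h
  linarith

end

theorem eMSM_relaxed_lower_bound_general
    {α : Type*} [MeasurableSpace α] (μ : Measure α) [IsProbabilityMeasure μ]
    (lam η : α → ℝ) (hlam : Measurable lam) (hη : Measurable η)
    (Λ₁ Λ₂ Δ₁ Δ₂ m : ℝ)
    (hΛlt : Λ₁ < Λ₂)
    (hlam_bd : ∀ᵐ u ∂μ, Λ₁ ≤ lam u ∧ lam u ≤ Λ₂)
    (hlam_int : (∫ u, lam u ∂μ) = 1)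
    (hη_bd : ∀ᵐ u ∂μ, m - Δ₁ ≤ η u ∧ η u ≤ m + Δ₂)
    (hη_int : (∫ u, η u ∂μ) = m) :
    m - (Λ₂ - Λ₁) *
        min ((1 - (Λ₂ - 1) / (Λ₂ - Λ₁)) * Δ₁) (((Λ₂ - 1) / (Λ₂ - Λ₁)) * Δ₂) ≤
      ∫ u, η u * lam u ∂μ := by
  have hη_i : Integrable η μ := .of_mem_Icc (m - Δ₁) (m + Δ₂) hη.aemeasurable hη_bd
  have hlam_i : Integrable lam μ := .of_mem_Icc Λ₁ Λ₂ hlam.aemeasurable hlam_bd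
  have hprod_i : Integrable (fun u => η u * lam u) μ := by
    refine hη_i.mul_bdd hlam.aestronglyMeasurable (c := max |Λ₁| |Λ₂|) ?_
    filter_upwards [hlam_bd] with u hu
    exact abs_le_max_abs_abs hu.1 hu.2
  have hlower := integral_mul_ge_of_ae_ge hη_i hlam_i hprod_i
    (hη_bd.mono fun _ h => h.1) (hlam_bd.mono fun _ h => h.1)
  have hupper := integral_mul_ge_of_ae_le hη_i hlam_i hprod_i
    (hη_bd.mono fun _ h => h.2) (hlam_bd.mono fun _ h => h.2)
  rw [hη_int, hlam_int] at hlower hupper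
  have hgap : 0 < Λ₂ - Λ₁ := sub_pos.mpr hΛlt
  have h₁ : (Λ₂ - Λ₁) * ((1 - (Λ₂ - 1) / (Λ₂ - Λ₁)) * Δ₁) = (1 - Λ₁) * Δ₁ := by
    field_simp; ring
  have h₂ : (Λ₂ - Λ₁) * (((Λ₂ - 1) / (Λ₂ - Λ₁)) * Δ₂) = (Λ₂ - 1) * Δ₂ := by
    field_simp
  rw [mul_min_of_nonneg _ _ hgap.le, h₁, h₂, ← max_sub_sub_left]
  exact max_le (by linarith) (by linarith)

theorem eMSM_relaxed_lower_bound
    {α : Type*} [MeasurableSpace α] (μ : Measure α) [IsProbabilityMeasure μ]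
    (lam η : α → ℝ) (hlam : Measurable lam) (hη : Measurable η)
    (Λ₁ Λ₂ Δ₁ Δ₂ m : ℝ)
    (hΛ₁0 : 0 ≤ Λ₁) (hΛ₁1 : Λ₁ ≤ 1) (hΛ₂1 : 1 ≤ Λ₂) (hΛlt : Λ₁ < Λ₂)
    (hΔ₁ : 0 ≤ Δ₁) (hΔ₂ : 0 ≤ Δ₂)
    (hlam_bd : ∀ᵐ u ∂μ, Λ₁ ≤ lam u ∧ lam u ≤ Λ₂)
    (hlam_int : (∫ u, lam u ∂μ) = 1)
    (hη_bd : ∀ᵐ u ∂μ, m - Δ₁ ≤ η u ∧ η u ≤ m + Δ₂)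
    (hη_int : (∫ u, η u ∂μ) = m) :
    m - (Λ₂ - Λ₁) *
        min ((1 - (Λ₂ - 1) / (Λ₂ - Λ₁)) * Δ₁) (((Λ₂ - 1) / (Λ₂ - Λ₁)) * Δ₂) ≤
      ∫ u, η u * lam u ∂μ :=
  eMSM_relaxed_lower_bound_general μ lam η hlam hη Λ₁ Λ₂ Δ₁ Δ₂ m hΛlt hlam_bd hlam_int hη_bd hη_int
end

section
/- Let 0 ≤ Λ₁ ≤ 1 ≤ Λ₂ with Λ₁ < Λ₂, let Δ₁, Δ₂ ≥ 0 and m ∈ ℝ, and set τ := (Λ₂ − 1)/(Λ₂ − Λ₁). Then there exist a probability measure μ on the two-point space Bool and functions λ, η : Bool → ℝ such that Λ₁ ≤ λ ≤ Λ₂ pointwise, ∫ λ dμ = 1, m − Δ₁ ≤ η ≤ m + Δ₂ pointwise, ∫ η dμ = m, and ∫ η·λ dμ = m + (Λ₂ − Λ₁)·min( τ·Δ₁, (1 − τ)·Δ₂ ). -/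
/-!
The confounder is binary: `λ` takes the extreme values `Λ₁` on an atom of mass `τ` and `Λ₂` on
an atom of mass `1 - τ`, and `τ` is exactly the weight making `∫ λ = 1`. With
`c := min (τ Δ₁) ((1 - τ) Δ₂)`, let `η` sit at `m - d₁` on the first atom and at `m + d₂` on the
second, where `τ d₁ = (1 - τ) d₂ = c`; the upward and downward deviations cancel in `∫ η`,
while in `∫ η λ` they are weighted by `Λ₂` and `Λ₁` and leave `(Λ₂ - Λ₁) c`.
-/

open MeasureTheory ProbabilityTheory

lemma exists_mem_Icc_mul_eq {p c D : ℝ} (hp : 0 ≤ p) (hc : 0 ≤ c) (hcD : c ≤ p * D)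
    (hD : 0 ≤ D) : ∃ x ∈ Set.Icc 0 D, p * x = c := by
  rcases hp.eq_or_lt with rfl | hp
  · exact ⟨0, ⟨le_rfl, hD⟩, by linarith⟩
  · refine ⟨c / p, ⟨div_nonneg hc hp.le, ?_⟩, mul_div_cancel₀ c hp.ne'⟩
    rwa [div_le_iff₀ hp, mul_comm]

theorem eMSM_relaxed_upper_bound_attained_general
    (Λ₁ Λ₂ Δ₁ Δ₂ m : ℝ)
    (hΛ₁1 : Λ₁ ≤ 1) (hΛ₂1 : 1 ≤ Λ₂) (hΛlt : Λ₁ < Λ₂)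
    (hΔ₁ : 0 ≤ Δ₁) (hΔ₂ : 0 ≤ Δ₂) :
    ∃ (μ : Measure Bool) (lam η : Bool → ℝ), IsProbabilityMeasure μ ∧
      (∀ b, Λ₁ ≤ lam b ∧ lam b ≤ Λ₂) ∧
      (∫ b, lam b ∂μ) = 1 ∧
      (∀ b, m - Δ₁ ≤ η b ∧ η b ≤ m + Δ₂) ∧
      (∫ b, η b ∂μ) = m ∧
      (∫ b, η b * lam b ∂μ) =
        m + (Λ₂ - Λ₁) *
          min (((Λ₂ - 1) / (Λ₂ - Λ₁)) * Δ₁) ((1 - (Λ₂ - 1) / (Λ₂ - Λ₁)) * Δ₂) := by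
  set τ := (Λ₂ - 1) / (Λ₂ - Λ₁)
  have hgap : 0 < Λ₂ - Λ₁ := sub_pos.2 hΛlt
  have hτ : τ ∈ unitInterval :=
    ⟨div_nonneg (by linarith) hgap.le, (div_le_one hgap).2 (by linarith)⟩
  have hmix : τ * Λ₁ + (1 - τ) * Λ₂ = 1 := by
    simp only [τ]
    field_simp
    ring
  set c := min (τ * Δ₁) ((1 - τ) * Δ₂)
  have hc : 0 ≤ c := le_min (mul_nonneg hτ.1 hΔ₁) (mul_nonneg (sub_nonneg.2 hτ.2) hΔ₂)
  obtain ⟨d₁, ⟨hd₁, hd₁Δ⟩, hτd₁⟩ := exists_mem_Icc_mul_eq hτ.1 hc (min_le_left _ _) hΔ₁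
  obtain ⟨d₂, ⟨hd₂, hd₂Δ⟩, hτd₂⟩ :=
    exists_mem_Icc_mul_eq (sub_nonneg.2 hτ.2) hc (min_le_right _ _) hΔ₂
  refine ⟨Ber(false, true, ⟨τ, hτ⟩), fun b ↦ cond b Λ₂ Λ₁, fun b ↦ cond b (m + d₂) (m - d₁),
    inferInstance, ?_, ?_, ?_, ?_, ?_⟩ <;>
    simp only [integral_bernoulliMeasure, Bool.forall_bool, cond_true, cond_false, smul_eq_mul]
  · exact ⟨⟨le_rfl, hΛlt.le⟩, hΛlt.le, le_rfl⟩
  · exact hmix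
  · exact ⟨⟨by linarith, by linarith⟩, by linarith, by linarith⟩
  · linear_combination hτd₂ - hτd₁
  · linear_combination m * hmix + Λ₂ * hτd₂ - Λ₁ * hτd₁

theorem eMSM_relaxed_upper_bound_attained
    (Λ₁ Λ₂ Δ₁ Δ₂ m : ℝ)
    (hΛ₁0 : 0 ≤ Λ₁) (hΛ₁1 : Λ₁ ≤ 1) (hΛ₂1 : 1 ≤ Λ₂) (hΛlt : Λ₁ < Λ₂)
    (hΔ₁ : 0 ≤ Δ₁) (hΔ₂ : 0 ≤ Δ₂) :
    ∃ (μ : Measure Bool) (lam η : Bool → ℝ), IsProbabilityMeasure μ ∧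
      (∀ b, Λ₁ ≤ lam b ∧ lam b ≤ Λ₂) ∧
      (∫ b, lam b ∂μ) = 1 ∧
      (∀ b, m - Δ₁ ≤ η b ∧ η b ≤ m + Δ₂) ∧
      (∫ b, η b ∂μ) = m ∧
      (∫ b, η b * lam b ∂μ) =
        m + (Λ₂ - Λ₁) *
          min (((Λ₂ - 1) / (Λ₂ - Λ₁)) * Δ₁) ((1 - (Λ₂ - 1) / (Λ₂ - Λ₁)) * Δ₂) :=
  eMSM_relaxed_upper_bound_attained_general Λ₁ Λ₂ Δ₁ Δ₂ m hΛ₁1 hΛ₂1 hΛlt hΔ₁ hΔ₂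
end

section
/- Let (Ω, F, P) be a probability space and 𝒢 ⊆ F a sub-σ-algebra. Let T : Ω → ℝ be measurable with T(ω) ∈ {0, 1} for all ω, and suppose π* := E[T | 𝒢] satisfies π* > 0 P-almost everywhere. Let Z : Ω → ℝ be integrable with T·Z integrable, and define m* := E[T·Z | 𝒢]/π*. Let π, m : Ω → ℝ be 𝒢-measurable with 0 < π ≤ 1 almost everywhere, and assume T·Z/π, T·m/π, m, T·m*, and (1 − T)·m* are all integrable. If either π = π* almost everywhere, or m = m* almost everywhere, then E[ T·Z/π − (T/π − 1)·m ] = E[ T·Z ] + E[ (1 − T)·m* ]. -/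
open MeasureTheory

lemma key_int {Ω : Type*} {F : MeasurableSpace Ω} (P : Measure Ω) [IsProbabilityMeasure P]
    {𝒢 : MeasurableSpace Ω} (h𝒢 : 𝒢 ≤ F) {g W : Ω → ℝ}
    (hg : StronglyMeasurable[𝒢] g) (hW : Integrable W P)
    (hgW : Integrable (fun ω => g ω * W ω) P) :
    ∫ ω, g ω * W ω ∂P = ∫ ω, g ω * (P[W|𝒢]) ω ∂P := by
  have h1 : P[g * W|𝒢] =ᵐ[P] g * P[W|𝒢] :=
    condExp_mul_of_stronglyMeasurable_left hg hgW hW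
  calc ∫ ω, g ω * W ω ∂P = ∫ ω, (P[g * W|𝒢]) ω ∂P := (integral_condExp h𝒢).symm
    _ = ∫ ω, g ω * (P[W|𝒢]) ω ∂P := integral_congr_ae h1

theorem doubly_robust_identity
    {Ω : Type*} (𝒢 : MeasurableSpace Ω) {F : MeasurableSpace Ω} (P : Measure Ω) [IsProbabilityMeasure P]
    (h𝒢 : 𝒢 ≤ F)
    (T Z : Ω → ℝ) (hT : Measurable T) (hT01 : ∀ ω, T ω = 0 ∨ T ω = 1)
    (hZ : Integrable Z P) (hTZ : Integrable (fun ω => T ω * Z ω) P)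
    (πstar mstar : Ω → ℝ)
    (hπstar : πstar = P[T|𝒢])
    (hπstar_pos : ∀ᵐ ω ∂P, 0 < πstar ω)
    (hmstar : mstar = fun ω => (P[fun ω' => T ω' * Z ω'|𝒢]) ω / πstar ω)
    (π m : Ω → ℝ)
    (hπ_meas : Measurable[𝒢] π) (hm_meas : Measurable[𝒢] m)
    (hπ_bd : ∀ᵐ ω ∂P, 0 < π ω ∧ π ω ≤ 1)
    (hint₁ : Integrable (fun ω => T ω * Z ω / π ω) P)
    (hint₂ : Integrable (fun ω => T ω * m ω / π ω) P)
    (hint₃ : Integrable m P)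
    (hint₄ : Integrable (fun ω => T ω * mstar ω) P)
    (hint₅ : Integrable (fun ω => (1 - T ω) * mstar ω) P)
    (hcase : (∀ᵐ ω ∂P, π ω = πstar ω) ∨ (∀ᵐ ω ∂P, m ω = mstar ω)) :
    ∫ ω, (T ω * Z ω / π ω - (T ω / π ω - 1) * m ω) ∂P =
      (∫ ω, T ω * Z ω ∂P) + ∫ ω, (1 - T ω) * mstar ω ∂P := by
  -- basic facts
  have hTint : Integrable T P := by
    refine Integrable.mono' (g := fun _ => (1 : ℝ)) (f := T) (integrable_const 1) ?_ ?_
    · exact hT.aestronglyMeasurable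
    · refine Filter.Eventually.of_forall fun ω => ?_
      rcases hT01 ω with h | h <;> simp [h]
  have hπstar_meas : StronglyMeasurable[𝒢] πstar := by
    rw [hπstar]; exact stronglyMeasurable_condExp
  have hmstar_meas : StronglyMeasurable[𝒢] mstar := by
    rw [hmstar]
    exact ((stronglyMeasurable_condExp.measurable).div
      ((hπstar ▸ stronglyMeasurable_condExp : StronglyMeasurable[𝒢] πstar).measurable)).stronglyMeasurable
  -- key identity: πstar * mstar = E[TZ|𝒢] a.e.
  have key1 : ∀ᵐ ω ∂P, πstar ω * mstar ω = (P[fun ω' => T ω' * Z ω'|𝒢]) ω := by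
    filter_upwards [hπstar_pos] with ω hω
    rw [hmstar]
    field_simp
  -- ∫ T Z = ∫ T mstar
  have hTmstar_int : Integrable (fun ω => mstar ω * T ω) P := by
    have : (fun ω => mstar ω * T ω) = fun ω => T ω * mstar ω := by funext ω; ring
    rw [this]; exact hint₄
  have hTZ_eq : ∫ ω, T ω * Z ω ∂P = ∫ ω, T ω * mstar ω ∂P := by
    have h1 : ∫ ω, mstar ω * T ω ∂P = ∫ ω, mstar ω * (P[T|𝒢]) ω ∂P :=
      key_int P h𝒢 hmstar_meas hTint hTmstar_int
    have h2 : ∫ ω, mstar ω * (P[T|𝒢]) ω ∂P = ∫ ω, T ω * Z ω ∂P := by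
      rw [← integral_condExp (f := fun ω' => T ω' * Z ω') h𝒢]
      refine integral_congr_ae ?_
      filter_upwards [key1] with ω hω
      rw [← hπstar, ← hω]; ring
    have h3 : ∫ ω, T ω * mstar ω ∂P = ∫ ω, mstar ω * T ω ∂P := by
      refine integral_congr_ae (Filter.Eventually.of_forall fun ω => ?_); ring
    rw [h3, h1, h2]
  -- RHS = ∫ mstar
  have hRHS : (∫ ω, T ω * Z ω ∂P) + ∫ ω, (1 - T ω) * mstar ω ∂P = ∫ ω, mstar ω ∂P := by
    rw [hTZ_eq, ← integral_add hint₄ hint₅]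
    refine integral_congr_ae (Filter.Eventually.of_forall fun ω => ?_); ring
  -- LHS splits
  have hsplit : ∫ ω, (T ω * Z ω / π ω - (T ω / π ω - 1) * m ω) ∂P =
      (∫ ω, T ω * Z ω / π ω ∂P) - (∫ ω, T ω * m ω / π ω ∂P) + ∫ ω, m ω ∂P := by
    calc ∫ ω, (T ω * Z ω / π ω - (T ω / π ω - 1) * m ω) ∂P
        = ∫ ω, ((T ω * Z ω / π ω - T ω * m ω / π ω) + m ω) ∂P := by
          refine integral_congr_ae (Filter.Eventually.of_forall fun ω => ?_); ring
      _ = (∫ ω, (T ω * Z ω / π ω - T ω * m ω / π ω) ∂P) + ∫ ω, m ω ∂P :=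
          integral_add (hint₁.sub hint₂) hint₃
      _ = (∫ ω, T ω * Z ω / π ω ∂P) - (∫ ω, T ω * m ω / π ω ∂P) + ∫ ω, m ω ∂P := by
          rw [integral_sub hint₁ hint₂]
  -- integral A: ∫ TZ/π = ∫ π⁻¹ * E[TZ|𝒢]
  have hinv_meas : StronglyMeasurable[𝒢] (fun ω => (π ω)⁻¹) :=
    (hπ_meas.inv).stronglyMeasurable
  have hA : ∫ ω, T ω * Z ω / π ω ∂P
      = ∫ ω, (π ω)⁻¹ * (P[fun ω' => T ω' * Z ω'|𝒢]) ω ∂P := by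
    have hint : Integrable (fun ω => (π ω)⁻¹ * (T ω * Z ω)) P := by
      have : (fun ω => (π ω)⁻¹ * (T ω * Z ω)) = fun ω => T ω * Z ω / π ω := by
        funext ω; field_simp
      rw [this]; exact hint₁
    have h := key_int P h𝒢 hinv_meas hTZ hint
    calc ∫ ω, T ω * Z ω / π ω ∂P = ∫ ω, (π ω)⁻¹ * (T ω * Z ω) ∂P := by
          refine integral_congr_ae (Filter.Eventually.of_forall fun ω => ?_)
          field_simp
      _ = _ := h
  -- integral B: ∫ Tm/π = ∫ (m/π) * πstar
  have hmπ_meas : StronglyMeasurable[𝒢] (fun ω => m ω / π ω) :=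
    (hm_meas.div hπ_meas).stronglyMeasurable
  have hB : ∫ ω, T ω * m ω / π ω ∂P = ∫ ω, (m ω / π ω) * πstar ω ∂P := by
    have hint : Integrable (fun ω => (m ω / π ω) * T ω) P := by
      have : (fun ω => (m ω / π ω) * T ω) = fun ω => T ω * m ω / π ω := by
        funext ω; ring
      rw [this]; exact hint₂
    have h := key_int P h𝒢 hmπ_meas hTint hint
    calc ∫ ω, T ω * m ω / π ω ∂P = ∫ ω, (m ω / π ω) * T ω ∂P := by
          refine integral_congr_ae (Filter.Eventually.of_forall fun ω => ?_); ring
      _ = ∫ ω, (m ω / π ω) * (P[T|𝒢]) ω ∂P := h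
      _ = _ := by rw [hπstar]
  rw [hsplit, hRHS]
  rcases hcase with hc | hc
  · -- π = πstar a.e.
    have hA' : ∫ ω, (π ω)⁻¹ * (P[fun ω' => T ω' * Z ω'|𝒢]) ω ∂P = ∫ ω, mstar ω ∂P := by
      refine integral_congr_ae ?_
      filter_upwards [hc, hπstar_pos, key1] with ω h1 h2 h3
      rw [← h3, h1]
      field_simp
    have hB' : ∫ ω, (m ω / π ω) * πstar ω ∂P = ∫ ω, m ω ∂P := by
      refine integral_congr_ae ?_
      filter_upwards [hc, hπ_bd] with ω h1 h2
      rw [← h1]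
      exact div_mul_cancel₀ (m ω) h2.1.ne'
    rw [hA, hB, hA', hB']; ring
  · -- m = mstar a.e.
    have hB' : ∫ ω, (m ω / π ω) * πstar ω ∂P
        = ∫ ω, (π ω)⁻¹ * (P[fun ω' => T ω' * Z ω'|𝒢]) ω ∂P := by
      refine integral_congr_ae ?_
      filter_upwards [hc, key1] with ω h1 h2
      rw [h1, ← h2]
      field_simp
    have hm' : ∫ ω, m ω ∂P = ∫ ω, mstar ω ∂P := integral_congr_ae hc
    rw [hA, hB, hB', hm']; ring
end

section
/- Let p₁ ∈ (0, 1), τ ∈ (0, 1), Θ ≥ 1, and set a := min( (1 − τ)·(1 − p₁), τ·p₁ ). Consider the set S of values min( τ·Δ₁, (1 − τ)·Δ₂, a ) over all pairs (Δ₁, Δ₂) with Δ₁ ≥ 0, Δ₂ ≥ 0, Δ₁ < p₁, and min(p₁ + Δ₂, 1) ≤ Θ·(p₁ − Δ₁). Then the supremum of S equals min( τ·(Θ − 1)·p₁/(τ/(1 − τ) + Θ), a ), and it is attained at Δ₁ = (Θ − 1)·p₁/(τ/(1 − τ) + Θ) and Δ₂ = (Θ − 1)·p₁/(1 + ((1 −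 τ)/τ)·Θ). -/
theorem DV_sharp_optimization
    (p₁ τ Θ : ℝ) (hp : p₁ ∈ Set.Ioo (0 : ℝ) 1) (hτ : τ ∈ Set.Ioo (0 : ℝ) 1) (hΘ : 1 ≤ Θ) :
    let a := min ((1 - τ) * (1 - p₁)) (τ * p₁)
    let v := min (τ * (Θ - 1) * p₁ / (τ / (1 - τ) + Θ)) a
    let D₁ := (Θ - 1) * p₁ / (τ / (1 - τ) + Θ)
    let D₂ := (Θ - 1) * p₁ / (1 + ((1 - τ) / τ) * Θ)
    sSup {x : ℝ | ∃ Δ₁ Δ₂ : ℝ, 0 ≤ Δ₁ ∧ 0 ≤ Δ₂ ∧ Δ₁ < p₁ ∧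
        min (p₁ + Δ₂) 1 ≤ Θ * (p₁ - Δ₁) ∧
        x = min (τ * Δ₁) (min ((1 - τ) * Δ₂) a)} = v ∧
      (0 ≤ D₁ ∧ 0 ≤ D₂ ∧ D₁ < p₁ ∧ min (p₁ + D₂) 1 ≤ Θ * (p₁ - D₁) ∧
        min (τ * D₁) (min ((1 - τ) * D₂) a) = v) := by
  obtain ⟨hp1, hp2⟩ := hp
  obtain ⟨hτ1, hτ2⟩ := hτ
  intro a v D₁ D₂
  have h1τ : (0:ℝ) < 1 - τ := by linarith
  have hΘ0 : (0:ℝ) < Θ := by linarith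
  have hd : (0:ℝ) < τ / (1 - τ) + Θ := by positivity
  have hd2 : (0:ℝ) < 1 + ((1 - τ) / τ) * Θ := by positivity
  have hΘ1 : (0:ℝ) ≤ Θ - 1 := by linarith
  have hD₁ : 0 ≤ D₁ := by
    apply div_nonneg _ hd.le; positivity
  have hD₂ : 0 ≤ D₂ := by
    apply div_nonneg _ hd2.le; positivity
  have hD₁lt : D₁ < p₁ := by
    rw [div_lt_iff₀ hd]
    have : τ / (1 - τ) > 0 := by positivity
    nlinarith
  have hτD₁ : τ * D₁ = τ * (Θ - 1) * p₁ / (τ / (1 - τ) + Θ) := by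
    show τ * ((Θ - 1) * p₁ / (τ / (1 - τ) + Θ)) = _
    rw [mul_div_assoc]; ring_nf
  have hEq2 : τ * D₁ = (1 - τ) * D₂ := by
    show τ * ((Θ - 1) * p₁ / (τ / (1 - τ) + Θ)) = (1 - τ) * ((Θ - 1) * p₁ / (1 + ((1 - τ) / τ) * Θ))
    rw [div_add' _ _ _ (ne_of_gt h1τ)] at *
    field_simp
  have hEq : p₁ + D₂ = Θ * (p₁ - D₁) := by
    show p₁ + (Θ - 1) * p₁ / (1 + ((1 - τ) / τ) * Θ) = Θ * (p₁ - (Θ - 1) * p₁ / (τ / (1 - τ) + Θ))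
    field_simp
    ring
  have hfeas : min (p₁ + D₂) 1 ≤ Θ * (p₁ - D₁) := hEq ▸ min_le_left _ _
  have hval : min (τ * D₁) (min ((1 - τ) * D₂) a) = v := by
    rw [← hEq2, ← min_assoc, min_self, hτD₁]
  refine ⟨?_, hD₁, hD₂, hD₁lt, hfeas, hval⟩
  have hmem : v ∈ {x : ℝ | ∃ Δ₁ Δ₂ : ℝ, 0 ≤ Δ₁ ∧ 0 ≤ Δ₂ ∧ Δ₁ < p₁ ∧
      min (p₁ + Δ₂) 1 ≤ Θ * (p₁ - Δ₁) ∧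
      x = min (τ * Δ₁) (min ((1 - τ) * Δ₂) a)} :=
    ⟨D₁, D₂, hD₁, hD₂, hD₁lt, hfeas, hval.symm⟩
  have hub : ∀ x ∈ {x : ℝ | ∃ Δ₁ Δ₂ : ℝ, 0 ≤ Δ₁ ∧ 0 ≤ Δ₂ ∧ Δ₁ < p₁ ∧
      min (p₁ + Δ₂) 1 ≤ Θ * (p₁ - Δ₁) ∧
      x = min (τ * Δ₁) (min ((1 - τ) * Δ₂) a)}, x ≤ v := by
    rintro x ⟨Δ₁, Δ₂, h1, h2, h3, h4, rfl⟩
    set x := min (τ * Δ₁) (min ((1 - τ) * Δ₂) a) with hx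
    have hxa : x ≤ a := le_trans (min_le_right _ _) (min_le_right _ _)
    refine le_min ?_ hxa
    rw [← hτD₁]
    by_contra hcon
    push_neg at hcon
    have hxτ : τ * D₁ < τ * Δ₁ := lt_of_lt_of_le hcon (min_le_left _ _)
    have hΔ₁ : D₁ < Δ₁ := (mul_lt_mul_iff_right₀ hτ1).mp hxτ
    have hx2 : (1 - τ) * D₂ < (1 - τ) * Δ₂ := by
      rw [← hEq2]
      exact lt_of_lt_of_le hcon (le_trans (min_le_right _ _) (min_le_left _ _))
    have hΔ₂ : D₂ < Δ₂ := (mul_lt_mul_iff_right₀ h1τ).mp hx2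
    have hx3 : (1 - τ) * D₂ < (1 - τ) * (1 - p₁) := by
      rw [← hEq2]
      exact lt_of_lt_of_le hcon (le_trans hxa (min_le_left _ _))
    have hD₂p : D₂ < 1 - p₁ := (mul_lt_mul_iff_right₀ h1τ).mp hx3
    rcases le_or_gt (p₁ + Δ₂) 1 with hc | hc
    · have h5 : p₁ + Δ₂ ≤ Θ * (p₁ - Δ₁) := min_eq_left hc ▸ h4
      nlinarith [hEq, hΘ0]
    · have h5 : (1:ℝ) ≤ Θ * (p₁ - Δ₁) := min_eq_right hc.le ▸ h4
      nlinarith [hEq, hΘ0]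
  exact (IsGreatest.csSup_eq ⟨hmem, hub⟩)
end

section
/- For all real numbers Λ > 1 and Θ > 1, (Λ·Θ + 1)/(Λ + Θ) < Λ·Θ/(Λ + Θ − 1). -/
theorem sharp_DV_factor_strictly_tighter (Λ Θ : ℝ) (hΛ : 1 < Λ) (hΘ : 1 < Θ) :
    (Λ * Θ + 1) / (Λ + Θ) < Λ * Θ / (Λ + Θ - 1) := by
  rw [div_lt_div_iff₀ (by linarith) (by linarith)]
  nlinarith [mul_pos (sub_pos.2 hΛ) (sub_pos.2 hΘ)]
end

section
/- Let τ ∈ (0, 1), p₁ ∈ (0, 1), and δ ∈ [0, 1), and set M := min( odds(τ), odds(1 − p₁) ), where odds(x) := x/(1 − x). Then δ·odds(1 − τ)·M ≤ δ < 1, and (1 + δ·M)/(1 − δ·odds(1 − τ)·M) ≤ (1 + δ·odds(τ))/(1 − δ). Moreover, if p₁ ≤ 1 − τ then equality holds. -/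
/-- The odds function odds(x) = x / (1 − x). -/
noncomputable def odds (x : ℝ) : ℝ := x / (1 - x)

theorem theta_upper_alignment
    (τ p₁ δ : ℝ) (hτ : τ ∈ Set.Ioo (0 : ℝ) 1) (hp : p₁ ∈ Set.Ioo (0 : ℝ) 1)
    (hδ : δ ∈ Set.Ico (0 : ℝ) 1) :
    let M := min (odds τ) (odds (1 - p₁))
    (δ * odds (1 - τ) * M ≤ δ ∧ δ < 1) ∧
      (1 + δ * M) / (1 - δ * odds (1 - τ) * M) ≤ (1 + δ * odds τ) / (1 - δ) ∧
      (p₁ ≤ 1 - τ →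
        (1 + δ * M) / (1 - δ * odds (1 - τ) * M) = (1 + δ * odds τ) / (1 - δ)) := by
  obtain ⟨hτ0, hτ1⟩ := hτ
  obtain ⟨hp0, hp1⟩ := hp
  obtain ⟨hδ0, hδ1⟩ := hδ
  intro M
  have hoτ : 0 < odds τ := div_pos hτ0 (by linarith)
  have hop : 0 < odds (1 - p₁) := by
    unfold odds
    have : 1 - (1 - p₁) = p₁ := by ring
    rw [this]
    exact div_pos (by linarith) hp0
  have ho : 0 < odds (1 - τ) := by
    unfold odds
    have : 1 - (1 - τ) = τ := by ring
    rw [this]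
    exact div_pos (by linarith) hτ0
  have hprod : odds (1 - τ) * odds τ = 1 := by
    unfold odds
    have h1 : 1 - (1 - τ) = τ := by ring
    rw [h1]
    have hne1 : (1 - τ) ≠ 0 := by linarith
    have hne2 : τ ≠ 0 := ne_of_gt hτ0
    field_simp
  have hM0 : 0 < M := lt_min hoτ hop
  have hMle : M ≤ odds τ := min_le_left _ _
  have h1 : δ * odds (1 - τ) * M ≤ δ := by
    have h2 : δ * odds (1 - τ) * M ≤ δ * odds (1 - τ) * odds τ :=
      mul_le_mul_of_nonneg_left hMle (by positivity)
    have h3 : δ * odds (1 - τ) * odds τ = δ := by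
      rw [mul_assoc, hprod, mul_one]
    linarith
  have hden : 0 < 1 - δ * odds (1 - τ) * M := by linarith
  have hden' : 0 < 1 - δ := by linarith
  have hδle : δ * M ≤ δ * odds τ := mul_le_mul_of_nonneg_left hMle hδ0
  have expand : (1 + δ * odds τ) * (1 - δ * odds (1 - τ) * M) - (1 + δ * M) * (1 - δ)
      = (δ * odds τ - δ * M) + (δ - δ * odds (1 - τ) * M) := by
    linear_combination (-(δ^2 * M)) * hprod
  refine ⟨⟨h1, hδ1⟩, ?_, ?_⟩
  · rw [div_le_div_iff₀ hden hden']
    linarith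
  · intro hple
    have hMeq : M = odds τ := by
      apply min_eq_left
      unfold odds
      have h2 : 1 - (1 - p₁) = p₁ := by ring
      rw [h2]
      rw [div_le_div_iff₀ (by linarith) hp0]
      nlinarith
    have h3 : δ * odds (1 - τ) * odds τ = δ := by
      rw [mul_assoc, hprod, mul_one]
    rw [hMeq, h3]
end

section
/- Let τ ∈ (0, 1), p₁ ∈ (0, 1), and δ ∈ [0, 1). Set a := min( (1 − τ)·(1 − p₁), τ·p₁ ) and M := min( odds(τ), odds(1 − p₁) ), where odds(x) := x/(1 − x). Then p₁ − (δ/τ)·a > 0, 1 − δ·odds(1 − τ)·M > 0, and ( p₁ + (δ/(1 − τ))·a ) / ( p₁ − (δ/τ)·a ) = ( 1 + δ·M ) / ( 1 − δ·odds(1 − τ)·M ). -/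
lemma odds_one_sub (x : ℝ) : odds (1 - x) = (1 - x) / x := by
  rw [odds, sub_sub_cancel]

lemma odds_nonneg {x : ℝ} (h₀ : 0 ≤ x) (h₁ : x ≤ 1) : 0 ≤ odds x :=
  div_nonneg h₀ (sub_nonneg.2 h₁)

lemma one_sub_mul_odds {x : ℝ} (h : x ≠ 1) : (1 - x) * odds x = x :=
  mul_div_cancel₀ x (sub_ne_zero.2 h.symm)

lemma mul_odds_one_sub {x : ℝ} (h : x ≠ 0) : x * odds (1 - x) = 1 - x := by
  rw [odds_one_sub, mul_div_cancel₀ _ h]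

lemma odds_one_sub_mul_odds {x : ℝ} (h₀ : x ≠ 0) (h₁ : x ≠ 1) : odds (1 - x) * odds x = 1 := by
  rw [odds_one_sub, odds, div_mul_div_comm, mul_comm x,
    div_self (mul_ne_zero (sub_ne_zero.2 h₁.symm) h₀)]

lemma min_quantileLoss_eq_mul_min_odds {τ p : ℝ} (hτ : τ ≠ 1) (hp : p ≠ 0)
    (hnonneg : 0 ≤ (1 - τ) * p) :
    min ((1 - τ) * (1 - p)) (τ * p) = (1 - τ) * p * min (odds τ) (odds (1 - p)) := by
  rw [mul_min_of_nonneg _ _ hnonneg, min_comm, mul_right_comm, one_sub_mul_odds hτ,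
    mul_assoc, mul_odds_one_sub hp]

lemma one_sub_mul_odds_one_sub_mul_pos {τ δ M : ℝ} (hτ : τ ∈ Set.Ioo (0 : ℝ) 1)
    (hδ : δ ∈ Set.Ico (0 : ℝ) 1) (hM : M ≤ odds τ) :
    0 < 1 - δ * odds (1 - τ) * M := by
  have hprod : odds (1 - τ) * M ≤ 1 := by
    calc odds (1 - τ) * M ≤ odds (1 - τ) * odds τ :=
          mul_le_mul_of_nonneg_left hM (odds_nonneg (by linarith [hτ.2]) (by linarith [hτ.1]))
      _ = 1 := odds_one_sub_mul_odds hτ.1.ne' hτ.2.ne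
  have : δ * (odds (1 - τ) * M) ≤ δ := mul_le_of_le_one_right hδ.1 hprod
  linarith [hδ.2, mul_assoc δ (odds (1 - τ)) M]

theorem theta_of_delta_identity
    (τ p₁ δ : ℝ) (hτ : τ ∈ Set.Ioo (0 : ℝ) 1) (hp : p₁ ∈ Set.Ioo (0 : ℝ) 1)
    (hδ : δ ∈ Set.Ico (0 : ℝ) 1) :
    let a := min ((1 - τ) * (1 - p₁)) (τ * p₁)
    let M := min (odds τ) (odds (1 - p₁))
    0 < p₁ - (δ / τ) * a ∧ 0 < 1 - δ * odds (1 - τ) * M ∧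
      (p₁ + (δ / (1 - τ)) * a) / (p₁ - (δ / τ) * a) =
        (1 + δ * M) / (1 - δ * odds (1 - τ) * M) := by
  intro a M
  have hτ₀ : τ ≠ 0 := hτ.1.ne'
  have hτ₁ : 1 - τ ≠ 0 := sub_ne_zero.2 hτ.2.ne'
  have ha : a = (1 - τ) * p₁ * M :=
    min_quantileLoss_eq_mul_min_odds hτ.2.ne hp.1.ne'
      (mul_nonneg (sub_nonneg.2 hτ.2.le) hp.1.le)
  have hden : 0 < 1 - δ * odds (1 - τ) * M :=
    one_sub_mul_odds_one_sub_mul_pos hτ hδ (min_le_left _ _)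
  have hnum_eq : p₁ + δ / (1 - τ) * a = p₁ * (1 + δ * M) := by
    rw [ha]; field_simp
  have hden_eq : p₁ - δ / τ * a = p₁ * (1 - δ * odds (1 - τ) * M) := by
    rw [ha, odds_one_sub]; field_simp
  refine ⟨hden_eq ▸ mul_pos hp.1 hden, hden, ?_⟩
  rw [hnum_eq, hden_eq, mul_div_mul_left _ _ hp.1.ne']
end
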